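/- Let f, f_prev : ℝ → Y be continuously differentiable with f(0) = f(T) = 0. Let u, u_prev, w : ℝ → H be differentiable with i·u'(t) = A(u(t)) + B(f(t)), u(0) = 0; i·u_prev'(t) = A(u_prev(t)) + B(f_prev(t)), u_prev(0) = 0; and i·w'(t) = A(w(t)) + B(f'(t)), w(0) = 0. Assume the Jordan chain relation A(u(T)) = λ·u(T) + u_prev(T) for some λ ∈ ℂ. Then w(T) = −i·λ·u(T) − i·u_prev(T). (This shows the controls steering the system to a Jordan chain of root vectors φ_k^l, with (A − λ_k)φ_k^l = φ_k^{l−1}, solve the generalized spectral problem Cᵀ ḟ_k^l + i λ_k Cᵀ f_k^l = −i Cᵀ f_k^{l−1}.) -/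

import Mathlib

/-!
Differentiating `i u' = A u + B f` shows that `u'` solves the same equation driven by `f'`, and
`u'(0) = -i (A u(0) + B f(0)) = 0`. By uniqueness for this Lipschitz ODE, `w = u'`, so
`w(T) = -i (A u(T) + B f(T)) = -i A u(T)` since `f(T) = 0`, and the Jordan chain relation finishes.
-/

open Complex

section SchrodingerEquation

variable {H : Type*} [NormedAddCommGroup H] [NormedSpace ℂ H] (A : H →L[ℂ] H)

theorem eq_neg_I_smul_of_I_smul_eq {x y : H} (h : I • x = y) : x = -I • y := by
  rw [← h, smul_smul]
  simp

theorem eq_of_I_smul_deriv_eq {x y g : ℝ → H}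
    (hx : Differentiable ℝ x) (hy : Differentiable ℝ y)
    (hxeq : ∀ t, I • deriv x t = A (x t) + g t) (hyeq : ∀ t, I • deriv y t = A (y t) + g t)
    (h0 : x 0 = y 0) : x = y := by
  have hlip : ∀ t, LipschitzOnWith ‖A‖₊ (fun z : H => -I • (A z + g t)) Set.univ := by
    intro t
    refine LipschitzWith.lipschitzOnWith fun z z' => ?_
    simp only [edist_eq_enorm_sub, ← smul_sub, add_sub_add_right_eq_sub, ← map_sub, enorm_smul]
    simp only [enorm_eq_nnnorm, nnnorm_neg, nnnorm_I, ENNReal.coe_one, one_mul]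
    exact_mod_cast A.le_opNNNorm (z - z')
  refine ODE_solution_unique_univ (s := fun _ => Set.univ) hlip (fun t => ⟨?_, trivial⟩)
    (fun t => ⟨?_, trivial⟩) h0
  · exact eq_neg_I_smul_of_I_smul_eq (hxeq t) ▸ (hx t).hasDerivAt
  · exact eq_neg_I_smul_of_I_smul_eq (hyeq t) ▸ (hy t).hasDerivAt

theorem differentiable_deriv_and_I_smul_deriv_deriv {u g : ℝ → H}
    (hu : Differentiable ℝ u) (hg : Differentiable ℝ g)
    (hueq : ∀ t, I • deriv u t = A (u t) + g t) :
    Differentiable ℝ (deriv u) ∧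
      ∀ t, I • deriv (deriv u) t = A (deriv u t) + deriv g t := by
  have hu' : deriv u = fun t => -I • (A (u t) + g t) :=
    funext fun t => eq_neg_I_smul_of_I_smul_eq (hueq t)
  have hderiv : ∀ t, HasDerivAt (deriv u) (-I • (A (deriv u t) + deriv g t)) t := fun t => by
    nth_rw 1 [hu']
    exact (((A.restrictScalars ℝ).hasFDerivAt.comp_hasDerivAt t (hu t).hasDerivAt).add
      (hg t).hasDerivAt).const_smul (-I)
  refine ⟨fun t => (hderiv t).differentiableAt, fun t => ?_⟩
  rw [(hderiv t).deriv, smul_smul]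
  simp

end SchrodingerEquation

theorem stmt_10_general {H Y : Type*}
    [NormedAddCommGroup H] [NormedSpace ℂ H]
    [NormedAddCommGroup Y] [NormedSpace ℂ Y]
    (A : H →L[ℂ] H) (B : Y →L[ℂ] H) (T : ℝ)
    (f : ℝ → Y) (hf : ContDiff ℝ 1 f)
    (hf0 : f 0 = 0) (hfT : f T = 0)
    (u u_prev w : ℝ → H)
    (hu : Differentiable ℝ u)
    (hw : Differentiable ℝ w)
    (hueq : ∀ t : ℝ, Complex.I • deriv u t = A (u t) + B (f t))
    (hu0 : u 0 = 0)
    (hweq : ∀ t : ℝ, Complex.I • deriv w t = A (w t) + B (deriv f t))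
    (hw0 : w 0 = 0)
    (lam : ℂ) (hchain : A (u T) = lam • u T + u_prev T) :
    w T = (-Complex.I * lam) • u T - Complex.I • u_prev T := by
  have hfd : Differentiable ℝ f := hf.differentiable one_ne_zero
  have hBf : ∀ t, deriv (fun s => B (f s)) t = B (deriv f t) := fun t =>
    ((B.restrictScalars ℝ).hasFDerivAt.comp_hasDerivAt t (hfd t).hasDerivAt).deriv
  obtain ⟨hdu, hdu_eq⟩ := differentiable_deriv_and_I_smul_deriv_deriv A hu
    ((B.restrictScalars ℝ).differentiable.comp hfd) hueq
  have hw_eq : w = deriv u := by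
    refine eq_of_I_smul_deriv_eq A hw hdu hweq (fun t => hBf t ▸ hdu_eq t) ?_
    rw [hw0, eq_neg_I_smul_of_I_smul_eq (hueq 0), hu0, hf0, map_zero, map_zero, add_zero,
      smul_zero]
  rw [hw_eq, eq_neg_I_smul_of_I_smul_eq (hueq T), hfT, map_zero, add_zero, hchain]
  module

/-- Jordan-chain version of the generalized spectral problem:
if `A(u(T)) = λ·u(T) + u_prev(T)` then `w(T) = −i·λ·u(T) − i·u_prev(T)`,
i.e. `Cᵀ ḟ_k^l + i λ_k Cᵀ f_k^l = −i Cᵀ f_k^{l−1}`. -/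
theorem stmt_10 {H Y : Type*}
    [NormedAddCommGroup H] [NormedSpace ℂ H]
    [NormedAddCommGroup Y] [NormedSpace ℂ Y]
    (A : H →L[ℂ] H) (B : Y →L[ℂ] H) (T : ℝ) (hT : 0 < T)
    (f f_prev : ℝ → Y) (hf : ContDiff ℝ 1 f) (hf_prev : ContDiff ℝ 1 f_prev)
    (hf0 : f 0 = 0) (hfT : f T = 0)
    (u u_prev w : ℝ → H)
    (hu : Differentiable ℝ u) (hu_prev : Differentiable ℝ u_prev)
    (hw : Differentiable ℝ w)
    (hueq : ∀ t : ℝ, Complex.I • deriv u t = A (u t) + B (f t))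
    (hu0 : u 0 = 0)
    (hu_preveq : ∀ t : ℝ, Complex.I • deriv u_prev t = A (u_prev t) + B (f_prev t))
    (hu_prev0 : u_prev 0 = 0)
    (hweq : ∀ t : ℝ, Complex.I • deriv w t = A (w t) + B (deriv f t))
    (hw0 : w 0 = 0)
    (lam : ℂ) (hchain : A (u T) = lam • u T + u_prev T) :
    w T = (-Complex.I * lam) • u T - Complex.I • u_prev T :=
  stmt_10_general A B T f hf hf0 hfT u u_prev w hu hw hueq hu0 hweq hw0 lam hchain
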